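/- Define, for sub-probability measures m, n with m(𝕋^d) ≤ n(𝕋^d), ρ(m,n) = n(𝕋^d) − m(𝕋^d) + inf{ d(m, n') : n' ≤ n, n'(𝕋^d) = m(𝕋^d) } (and symmetrically otherwise). Then for all m, n ∈ P_sub: d(m,n) ≤ ρ(m,n) ≤ 3 d(m,n). -/

import Mathlib

open MeasureTheory
open scoped ENNReal NNReal Classical

/-- The `d`-dimensional flat torus. -/
abbrev Torus (d : ℕ) := Fin d → AddCircle (1 : ℝ)

/-- `f` is an admissible test function: `‖f‖_∞ + ‖Df‖_∞ ≤ 1`, encoded via a sup-norm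
bound `a` and a Lipschitz constant `b` with `a + b ≤ 1`. -/
def TestFn {α : Type*} [PseudoMetricSpace α] (f : α → ℝ) : Prop :=
  ∃ a b : ℝ≥0, (a : ℝ) + b ≤ 1 ∧ (∀ x, |f x| ≤ a) ∧ LipschitzWith b f

/-- The bounded-Lipschitz dual distance `d(m,n) = sup_{‖f‖_{W^{1,∞}} ≤ 1} ∫ f d(m−n)`. -/
noncomputable def BLdist {α : Type*} [MeasurableSpace α] [PseudoMetricSpace α]
    (m n : Measure α) : ℝ :=
  sSup {r | ∃ f : α → ℝ, TestFn f ∧ r = (∫ x, f x ∂m) - ∫ x, f x ∂n}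

/-- A sub-probability measure: total mass at most one. -/
def IsSubProb {α : Type*} [MeasurableSpace α] (m : Measure α) : Prop := m Set.univ ≤ 1

/-- The distance `ρ`: the difference of masses plus the infimal `BLdist` to a
sub-measure of the bigger measure having the same mass as the smaller one. -/
noncomputable def rho {d : ℕ} (m n : Measure (Torus d)) : ℝ :=
  if m Set.univ ≤ n Set.univ then
    (n Set.univ).toReal - (m Set.univ).toReal +
      sInf {r | ∃ n' : Measure (Torus d),
        n' ≤ n ∧ n' Set.univ = m Set.univ ∧ r = BLdist m n'}
  else
    (m Set.univ).toReal - (n Set.univ).toReal +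
      sInf {r | ∃ m' : Measure (Torus d),
        m' ≤ m ∧ m' Set.univ = n Set.univ ∧ r = BLdist m' n}

/-!
Both bounds come from two facts about the bounded-Lipschitz distance: the constant test
function `-1` shows that the mass defect `n(𝕋^d) − m(𝕋^d)` is at most `d(m,n)`, and for
`n' ≤ n` the distance `d(n,n')` is at most `n(𝕋^d) − n'(𝕋^d)`, since a test function is
bounded by `1` and `n − n'` is a nonnegative measure. The lower bound is then the triangle
inequality through any admissible `n'`; for the upper bound take `n' = (m(𝕋^d)/n(𝕋^d)) • n`,
so that `d(m,n') ≤ d(m,n) + (n(𝕋^d) − m(𝕋^d)) ≤ 2 d(m,n)`.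
-/

namespace TestFn

variable {α : Type*} [PseudoMetricSpace α] {f : α → ℝ}

lemma const {c : ℝ} (hc : |c| ≤ 1) : TestFn fun _ : α => c :=
  ⟨⟨|c|, abs_nonneg c⟩, 0, by simpa only [NNReal.coe_mk, NNReal.coe_zero, add_zero],
    fun _ => le_rfl, LipschitzWith.const' c⟩

lemma neg (hf : TestFn f) : TestFn fun x => -f x := by
  obtain ⟨a, b, hab, ha, hlip⟩ := hf
  exact ⟨a, b, hab, fun x => by simpa using ha x, hlip.neg⟩

lemma abs_le_one (hf : TestFn f) (x : α) : |f x| ≤ 1 := by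
  obtain ⟨a, b, hab, ha, -⟩ := hf
  linarith [ha x, b.coe_nonneg]

variable [MeasurableSpace α] (μ : Measure α) [IsFiniteMeasure μ]

lemma integrable [OpensMeasurableSpace α] (hf : TestFn f) : Integrable f μ := by
  obtain ⟨a, b, -, ha, hlip⟩ := hf
  exact (integrable_const (a : ℝ)).mono' hlip.continuous.aestronglyMeasurable
    (.of_forall fun x => by simpa using ha x)

lemma abs_integral_le (hf : TestFn f) : |∫ x, f x ∂μ| ≤ (μ Set.univ).toReal := by
  simpa [measureReal_def] using norm_integral_le_of_norm_le_const (μ := μ) (f := f) (C := 1)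
    (.of_forall fun x => by simpa using hf.abs_le_one x)

end TestFn

lemma MeasureTheory.Measure.exists_le_measure_univ_eq {α : Type*} [MeasurableSpace α]
    (n : Measure α) [IsFiniteMeasure n] {a : ℝ≥0∞} (ha : a ≤ n Set.univ) :
    ∃ n' ≤ n, n' Set.univ = a := by
  rcases eq_or_ne (n Set.univ) 0 with h0 | h0
  · exact ⟨n, le_rfl, h0.trans (nonpos_iff_eq_zero.1 (h0 ▸ ha)).symm⟩
  have hc : a / n Set.univ ≤ 1 := ENNReal.div_le_of_le_mul (by simpa using ha)
  refine ⟨(a / n Set.univ) • n, fun s => ?_, ?_⟩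
  · simpa using mul_le_of_le_one_left' (a := n s) hc
  · simpa using ENNReal.div_mul_cancel h0 (measure_ne_top n _)

section BLdist

variable {α : Type*} [PseudoMetricSpace α] [MeasurableSpace α]

lemma BLdist_comm (m n : Measure α) : BLdist m n = BLdist n m := by
  have key : ∀ m n : Measure α,
      {r | ∃ f : α → ℝ, TestFn f ∧ r = (∫ x, f x ∂m) - ∫ x, f x ∂n} ⊆
        {r | ∃ f : α → ℝ, TestFn f ∧ r = (∫ x, f x ∂n) - ∫ x, f x ∂m} := by
    rintro m n r ⟨f, hf, rfl⟩
    exact ⟨fun x => -f x, hf.neg, by simp only [integral_neg]; ring⟩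
  rw [BLdist, BLdist, (key m n).antisymm (key n m)]

lemma BLdist_le {m n : Measure α} {c : ℝ} (hc : 0 ≤ c)
    (h : ∀ f : α → ℝ, TestFn f → (∫ x, f x ∂m) - ∫ x, f x ∂n ≤ c) : BLdist m n ≤ c :=
  Real.sSup_le (by rintro r ⟨f, hf, rfl⟩; exact h f hf) hc

variable {m n n' k : Measure α} [IsFiniteMeasure m] [IsFiniteMeasure n]

lemma integral_sub_integral_le_BLdist {f : α → ℝ} (hf : TestFn f) :
    (∫ x, f x ∂m) - ∫ x, f x ∂n ≤ BLdist m n := by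
  refine le_csSup ⟨(m Set.univ).toReal + (n Set.univ).toReal, ?_⟩ ⟨f, hf, rfl⟩
  rintro r ⟨g, hg, rfl⟩
  linarith [(abs_le.1 (hg.abs_integral_le m)).2, (abs_le.1 (hg.abs_integral_le n)).1]

lemma BLdist_nonneg : 0 ≤ BLdist m n := by
  simpa using integral_sub_integral_le_BLdist (m := m) (n := n) (TestFn.const (c := 0) (by simp))

lemma sub_measure_univ_le_BLdist :
    (n Set.univ).toReal - (m Set.univ).toReal ≤ BLdist m n := by
  have := integral_sub_integral_le_BLdist (m := m) (n := n) (TestFn.const (c := -1) (by simp))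
  simp only [integral_const, smul_eq_mul, measureReal_def] at this
  linarith

lemma BLdist_triangle [IsFiniteMeasure k] : BLdist m k ≤ BLdist m n + BLdist n k :=
  BLdist_le (add_nonneg BLdist_nonneg BLdist_nonneg) fun _ hf => by
    linarith [integral_sub_integral_le_BLdist (m := m) (n := n) hf,
      integral_sub_integral_le_BLdist (m := n) (n := k) hf]

variable [OpensMeasurableSpace α]

lemma BLdist_le_sub_measure_univ_of_le (h : n' ≤ n) :
    BLdist n n' ≤ (n Set.univ).toReal - (n' Set.univ).toReal := by
  have : IsFiniteMeasure n' := isFiniteMeasure_of_le n h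
  have hsplit := Measure.sub_add_cancel_of_le h
  have hmass : (n Set.univ).toReal = ((n - n') Set.univ).toReal + (n' Set.univ).toReal := by
    conv_lhs => rw [← hsplit]
    exact ENNReal.toReal_add (measure_ne_top _ _) (measure_ne_top _ _)
  refine BLdist_le (by linarith [ENNReal.toReal_nonneg (a := (n - n') Set.univ)]) fun f hf => ?_
  have hint : ∫ x, f x ∂n = (∫ x, f x ∂(n - n')) + ∫ x, f x ∂n' := by
    conv_lhs => rw [← hsplit]
    exact integral_add_measure (hf.integrable _) (hf.integrable _)
  linarith [(abs_le.1 (hf.abs_integral_le (n - n'))).2]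

lemma BLdist_le_sub_measure_univ_of_le' (h : n' ≤ n) :
    BLdist n' n ≤ (n Set.univ).toReal - (n' Set.univ).toReal :=
  BLdist_comm n' n ▸ BLdist_le_sub_measure_univ_of_le h

end BLdist

section OneSidedRho

variable {α : Type*} [PseudoMetricSpace α] [MeasurableSpace α]

/-- The branch of `rho` in which `m` is the lighter measure. -/
noncomputable def oneSidedRho (m n : Measure α) : ℝ :=
  (n Set.univ).toReal - (m Set.univ).toReal +
    sInf {r | ∃ n' : Measure α, n' ≤ n ∧ n' Set.univ = m Set.univ ∧ r = BLdist m n'}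

lemma rho_eq_ite {d : ℕ} (m n : Measure (Torus d)) :
    rho m n = if m Set.univ ≤ n Set.univ then oneSidedRho m n else oneSidedRho n m := by
  simp only [rho, oneSidedRho, BLdist_comm _ n]

variable [OpensMeasurableSpace α] {m n : Measure α} [IsFiniteMeasure m] [IsFiniteMeasure n]

lemma BLdist_le_oneSidedRho (h : m Set.univ ≤ n Set.univ) : BLdist m n ≤ oneSidedRho m n := by
  obtain ⟨n₀, hn₀, hn₀_univ⟩ := n.exists_le_measure_univ_eq h
  refine sub_le_iff_le_add'.1 (le_csInf ⟨_, n₀, hn₀, hn₀_univ, rfl⟩ ?_)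
  rintro r ⟨n', hn', hn'_univ, rfl⟩
  have : IsFiniteMeasure n' := isFiniteMeasure_of_le n hn'
  have := BLdist_le_sub_measure_univ_of_le' hn'
  rw [hn'_univ] at this
  linarith [BLdist_triangle (m := m) (n := n') (k := n)]

lemma oneSidedRho_le_three_mul_BLdist (h : m Set.univ ≤ n Set.univ) :
    oneSidedRho m n ≤ 3 * BLdist m n := by
  obtain ⟨n₀, hn₀, hn₀_univ⟩ := n.exists_le_measure_univ_eq h
  have : IsFiniteMeasure n₀ := isFiniteMeasure_of_le n hn₀
  have hinf : sInf {r | ∃ n' : Measure α, n' ≤ n ∧ n' Set.univ = m Set.univ ∧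
      r = BLdist m n'} ≤ BLdist m n₀ := by
    refine csInf_le ⟨0, ?_⟩ ⟨n₀, hn₀, hn₀_univ, rfl⟩
    rintro r ⟨n', hn', -, rfl⟩
    have : IsFiniteMeasure n' := isFiniteMeasure_of_le n hn'
    exact BLdist_nonneg
  have hn_n₀ := BLdist_le_sub_measure_univ_of_le hn₀
  rw [hn₀_univ] at hn_n₀
  rw [oneSidedRho]
  linarith [BLdist_triangle (m := m) (n := n) (k := n₀),
    sub_measure_univ_le_BLdist (m := m) (n := n)]

end OneSidedRho

/-- `d(m,n) ≤ ρ(m,n) ≤ 3 d(m,n)` for sub-probability measures. -/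
theorem BLdist_le_rho_le_three_mul (d : ℕ) (m n : Measure (Torus d))
    (hm : IsSubProb m) (hn : IsSubProb n) :
    BLdist m n ≤ rho m n ∧ rho m n ≤ 3 * BLdist m n := by
  have : IsFiniteMeasure m := ⟨hm.trans_lt ENNReal.one_lt_top⟩
  have : IsFiniteMeasure n := ⟨hn.trans_lt ENNReal.one_lt_top⟩
  rw [rho_eq_ite]
  split_ifs with h
  · exact ⟨BLdist_le_oneSidedRho h, oneSidedRho_le_three_mul_BLdist h⟩
  · have h' := (not_le.1 h).le
    rw [BLdist_comm m n]
    exact ⟨BLdist_le_oneSidedRho h', oneSidedRho_le_three_mul_BLdist h'⟩
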